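/- arXiv:1703.06856 — 4 statements merged into one kernel-verified Lean document; each statement's English description precedes it below -/
import Mathlib

section
/- Let A, U be independent mean-zero L² random variables with variances v_A, v_U > 0, and α, β, γ, θ nonzero reals with X = α·A + β·U and Y = γ·U + θ·X. Then the least-squares coefficients (λ_X, λ_A) of Y on (X, A) satisfy λ_X = θ + γ/β and λ_A = −αγ/β, and the resulting predictor evaluated at the counterfactual (α·a' + β·u, a') equals (γ + θβ)·u + θα·a'; in particular it is a non-constant function of a' (since θα ≠ 0), hence not counterfactually fair. -/
open MeasureTheory ProbabilityTheory

theorem stmt_6 {Ω : Type*} [MeasureSpace Ω] [IsProbabilityMeasure (ℙ : Measure Ω)]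
    (A U : Ω → ℝ) (hA2 : MemLp A 2) (hU2 : MemLp U 2)
    (hInd : IndepFun A U ℙ)
    (hmA : ∫ ω, A ω = 0) (hmU : ∫ ω, U ω = 0)
    (vA vU : ℝ) (hvA : variance A ℙ = vA) (hvU : variance U ℙ = vU)
    (hvA0 : 0 < vA) (hvU0 : 0 < vU)
    (α β γ θ : ℝ) (hα : α ≠ 0) (hβ : β ≠ 0) (hγ : γ ≠ 0) (hθ : θ ≠ 0)
    (X Y : Ω → ℝ)
    (hX : ∀ ω, X ω = α * A ω + β * U ω) (hY : ∀ ω, Y ω = γ * U ω + θ * X ω)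
    (lamX lamA : ℝ) (hlamX : lamX = θ + γ / β) (hlamA : lamA = -(α * γ) / β) :
    -- (lamX, lamA) are the least-squares coefficients of Y on (X, A)
    (∀ lX lA : ℝ,
        (∫ ω, (Y ω - lamX * X ω - lamA * A ω) ^ 2) ≤
          ∫ ω, (Y ω - lX * X ω - lA * A ω) ^ 2) ∧
      -- the counterfactual value of the predictor under A ← a' with background u
      (∀ (u a' : ℝ),
        lamX * (α * a' + β * u) + lamA * a' = (γ + θ * β) * u + θ * α * a') ∧
      -- it is a non-constant function of a', hence not counterfactually fair
      (∀ (u a a' : ℝ), a ≠ a' →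
        lamX * (α * a + β * u) + lamA * a ≠ lamX * (α * a' + β * u) + lamA * a') := by
  have hres : ∀ ω, (Y ω - lamX * X ω - lamA * A ω) ^ 2 = 0 := by
    intro ω
    rw [hY ω, hX ω, hlamX, hlamA]
    field_simp
    ring
  refine ⟨?_, ?_, ?_⟩
  · intro lX lA
    have h0 : (∫ ω, (Y ω - lamX * X ω - lamA * A ω) ^ 2) = 0 := by
      simp [hres]
    rw [h0]
    exact integral_nonneg fun ω => sq_nonneg _
  · intro u a'
    rw [hlamX, hlamA]
    field_simp
    ring
  · intro u a a' hne
    rw [hlamX, hlamA]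
    intro h
    apply hne
    have h' : β * (θ * α * a) = β * (θ * α * a') := by
      field_simp at h
      linear_combination h
    exact mul_left_cancel₀ (mul_ne_zero hθ hα) (mul_left_cancel₀ hβ h')
end

section
/- Let A, U be independent mean-zero L² random variables with variances v_A, v_U > 0, and nonzero reals α, β, γ, η with X = α·A + β·U and Y = γ·U + η·A. Then the least-squares predictor of Y on (X, A) has coefficients λ_X = γ/β and λ_A = η − αγ/β, and its counterfactual value at (α·a' + β·u, a') equals γ·u + η·a', which is non-constant in a'; hence the predictor is not counterfactually fair. -/
open MeasureTheory ProbabilityTheory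

lemma div_mul_add_sub_mul_div {α β γ η : ℝ} (hβ : β ≠ 0) (u a : ℝ) :
    γ / β * (α * a + β * u) + (η - α * γ / β) * a = γ * u + η * a := by
  field_simp
  ring

lemma integral_sq_residual_le_of_forall_eq {Ω : Type*} [MeasurableSpace Ω] (μ : Measure Ω)
    {X A Y : Ω → ℝ} {c d : ℝ} (hY : ∀ ω, Y ω = c * X ω + d * A ω) (l m : ℝ) :
    ∫ ω, (Y ω - c * X ω - d * A ω) ^ 2 ∂μ ≤ ∫ ω, (Y ω - l * X ω - m * A ω) ^ 2 ∂μ := by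
  have hres : ∀ ω, (Y ω - c * X ω - d * A ω) ^ 2 = 0 := fun ω => by rw [hY]; ring
  simp only [hres, integral_zero]
  exact integral_nonneg fun ω => sq_nonneg _

theorem stmt_7_general {Ω : Type*} [MeasureSpace Ω]
    (A U : Ω → ℝ)
    (α β γ η : ℝ) (hβ : β ≠ 0) (hη : η ≠ 0)
    (X Y : Ω → ℝ)
    (hX : ∀ ω, X ω = α * A ω + β * U ω) (hY : ∀ ω, Y ω = γ * U ω + η * A ω)
    (lamX lamA : ℝ) (hlamX : lamX = γ / β) (hlamA : lamA = η - α * γ / β) :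
    -- (lamX, lamA) are the least-squares coefficients of Y on (X, A)
    (∀ lX lA : ℝ,
        (∫ ω, (Y ω - lamX * X ω - lamA * A ω) ^ 2) ≤
          ∫ ω, (Y ω - lX * X ω - lA * A ω) ^ 2) ∧
      -- counterfactual value under A ← a' with background u
      (∀ (u a' : ℝ), lamX * (α * a' + β * u) + lamA * a' = γ * u + η * a') ∧
      -- non-constant in a', hence not counterfactually fair
      (∀ (u a a' : ℝ), a ≠ a' →
        lamX * (α * a + β * u) + lamA * a ≠ lamX * (α * a' + β * u) + lamA * a') := by
  subst hlamX hlamA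
  have hcf := div_mul_add_sub_mul_div (α := α) (γ := γ) (η := η) hβ
  -- `Y` lies exactly in the span of `X` and `A`, so the least-squares residual vanishes.
  have hfit : ∀ ω, Y ω = γ / β * X ω + (η - α * γ / β) * A ω := fun ω => by
    rw [hX, hY, hcf]
  refine ⟨integral_sq_residual_le_of_forall_eq volume hfit, hcf, fun u a a' hne => ?_⟩
  rw [hcf, hcf, Ne, add_right_inj]
  exact fun h => hne (mul_left_cancel₀ hη h)

theorem stmt_7 {Ω : Type*} [MeasureSpace Ω] [IsProbabilityMeasure (ℙ : Measure Ω)]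
    (A U : Ω → ℝ) (hA2 : MemLp A 2) (hU2 : MemLp U 2)
    (hInd : IndepFun A U ℙ)
    (hmA : ∫ ω, A ω = 0) (hmU : ∫ ω, U ω = 0)
    (vA vU : ℝ) (hvA : variance A ℙ = vA) (hvU : variance U ℙ = vU)
    (hvA0 : 0 < vA) (hvU0 : 0 < vU)
    (α β γ η : ℝ) (hα : α ≠ 0) (hβ : β ≠ 0) (hγ : γ ≠ 0) (hη : η ≠ 0)
    (X Y : Ω → ℝ)
    (hX : ∀ ω, X ω = α * A ω + β * U ω) (hY : ∀ ω, Y ω = γ * U ω + η * A ω)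
    (lamX lamA : ℝ) (hlamX : lamX = γ / β) (hlamA : lamA = η - α * γ / β) :
    -- (lamX, lamA) are the least-squares coefficients of Y on (X, A)
    (∀ lX lA : ℝ,
        (∫ ω, (Y ω - lamX * X ω - lamA * A ω) ^ 2) ≤
          ∫ ω, (Y ω - lX * X ω - lA * A ω) ^ 2) ∧
      -- counterfactual value under A ← a' with background u
      (∀ (u a' : ℝ), lamX * (α * a' + β * u) + lamA * a' = γ * u + η * a') ∧
      -- non-constant in a', hence not counterfactually fair
      (∀ (u a a' : ℝ), a ≠ a' →
        lamX * (α * a + β * u) + lamA * a ≠ lamX * (α * a' + β * u) + lamA * a') :=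
  stmt_7_general A U α β γ η hβ hη X Y hX hY lamX lamA hlamX hlamA
end

section
/- Let X = A + U with A, U independent random variables, and let the predictor be Ŷ = λ·U with λ ≠ 0. Then the average causal effect E[Ŷ | do(A = a), X = x] − E[Ŷ | do(A = a'), X = x] = λ·(a − a') is nonzero for a ≠ a', while the individual counterfactual difference Ŷ_{A←a}(u) − Ŷ_{A←a'}(u) = λ·u − λ·u = 0 for every background value u. -/
/-- Structural equation `X = A + U`; predictor `Ŷ = λ·U`. Under `do(A = a)` with the
constraint `X = x`, the implied background value is `U = x − a`, so
`E[Ŷ | do(A = a), X = x] = Ŷ(x − a)`.  The average causal effect is nonzero, while the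
individual counterfactual difference `Ŷ_{A←a}(u) − Ŷ_{A←a'}(u)` vanishes, since `Ŷ`
depends only on the background value `u`. -/
theorem stmt_8 (lam : ℝ) (hlam : lam ≠ 0)
    (Yhat : ℝ → ℝ) (hYhat : ∀ u, Yhat u = lam * u)
    (EdoX : ℝ → ℝ → ℝ) (hE : ∀ a x, EdoX a x = Yhat (x - a)) :
    ∀ (a a' x u : ℝ), a ≠ a' →
      (EdoX a x - EdoX a' x = lam * (a' - a)) ∧
        (EdoX a x - EdoX a' x ≠ 0) ∧
        (Yhat u - Yhat u = 0) := by
  intro a a' x u h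
  have h1 : EdoX a x - EdoX a' x = lam * (a' - a) := by
    rw [hE, hE, hYhat, hYhat]; ring
  refine ⟨h1, ?_, by ring⟩
  rw [h1]
  exact mul_ne_zero hlam (sub_ne_zero.mpr (Ne.symm h))
end

section
/- Let Y and Ŷ be {0,1}-valued random variables and A a {0,1}-valued random variable. Suppose Ŷ satisfies both equalized odds (P(Ŷ=1 | Y=y, A=0) = P(Ŷ=1 | Y=y, A=1) for y ∈ {0,1}) and predictive parity (P(Y=1 | Ŷ=ŷ, A=0) = P(Y=1 | Ŷ=ŷ, A=1) for ŷ ∈ {0,1}), all conditioning events having positive probability. If Y is not a deterministic function of Ŷ almost surely (i.e., 0 < P(Y=1 | Ŷ=ŷ) < 1 for some ŷ with P(Ŷ=ŷ)>0 jointly with both A values), then Y and A are independent, i.e. P(Y=1 | A=0) = P(Y=1 | A=1). -/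
open MeasureTheory ProbabilityTheory

/-- Incompatibility of equalized odds and predictive parity (Chouldechova / Kleinberg et
al.): if a binary predictor `Ŷ` of a binary outcome `Y` satisfies both criteria with
respect to a binary attribute `A` (all conditioning events having positive probability),
and `Y` is not a deterministic function of `Ŷ`, then the base rates are equal:
`P(Y = 1 | A = 0) = P(Y = 1 | A = 1)`. -/
theorem stmt_13 {Ω : Type*} [MeasureSpace Ω] [IsProbabilityMeasure (ℙ : Measure Ω)]
    (Y Yhat A : Ω → Bool)
    (hmY : Measurable Y) (hmYhat : Measurable Yhat) (hmA : Measurable A)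
    -- positive probability of all conditioning events
    (hposYA : ∀ (y a : Bool), ℙ {ω | Y ω = y ∧ A ω = a} ≠ 0)
    (hposYhatA : ∀ (yh a : Bool), ℙ {ω | Yhat ω = yh ∧ A ω = a} ≠ 0)
    -- equalized odds
    (hEO : ∀ y : Bool,
      (ℙ[|{ω | Y ω = y ∧ A ω = false}]) {ω | Yhat ω = true} =
        (ℙ[|{ω | Y ω = y ∧ A ω = true}]) {ω | Yhat ω = true})
    -- predictive parity
    (hPP : ∀ yh : Bool,
      (ℙ[|{ω | Yhat ω = yh ∧ A ω = false}]) {ω | Y ω = true} =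
        (ℙ[|{ω | Yhat ω = yh ∧ A ω = true}]) {ω | Y ω = true})
    -- Y is not (a.s.) a deterministic function of Ŷ
    (hnondet : ∃ yh : Bool,
      0 < (ℙ[|{ω | Yhat ω = yh}]) {ω | Y ω = true} ∧
        (ℙ[|{ω | Yhat ω = yh}]) {ω | Y ω = true} < 1 ∧
        ℙ {ω | Yhat ω = yh ∧ A ω = false} ≠ 0 ∧
        ℙ {ω | Yhat ω = yh ∧ A ω = true} ≠ 0) :
    (ℙ[|{ω | A ω = false}]) {ω | Y ω = true} =
      (ℙ[|{ω | A ω = true}]) {ω | Y ω = true} := by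
  classical
  have mY : ∀ y : Bool, MeasurableSet {ω | Y ω = y} := fun y => hmY (measurableSet_singleton y)
  have mYh : ∀ yh : Bool, MeasurableSet {ω | Yhat ω = yh} :=
    fun yh => hmYhat (measurableSet_singleton yh)
  have mA : ∀ a : Bool, MeasurableSet {ω | A ω = a} := fun a => hmA (measurableSet_singleton a)
  have mYA : ∀ y a : Bool, MeasurableSet {ω | Y ω = y ∧ A ω = a} :=
    fun y a => (mY y).inter (mA a)
  have mYhA : ∀ yh a : Bool, MeasurableSet {ω | Yhat ω = yh ∧ A ω = a} :=
    fun yh a => (mYh yh).inter (mA a)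
  have mE : ∀ y yh a : Bool, MeasurableSet {ω | Y ω = y ∧ Yhat ω = yh ∧ A ω = a} :=
    fun y yh a => (mY y).inter ((mYh yh).inter (mA a))
  set P : Bool → Bool → Bool → ENNReal :=
    (fun y yh a => ℙ {ω | Y ω = y ∧ Yhat ω = yh ∧ A ω = a}) with hPdef
  -- splits
  have splitYA : ∀ y a : Bool, ℙ {ω | Y ω = y ∧ A ω = a} = P y true a + P y false a := by
    intro y a
    have hs : {ω | Y ω = y ∧ A ω = a} =
        {ω | Y ω = y ∧ Yhat ω = true ∧ A ω = a} ∪ {ω | Y ω = y ∧ Yhat ω = false ∧ A ω = a} := by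
      ext ω; cases h : Yhat ω <;> simp [h]
    have hd : Disjoint {ω | Y ω = y ∧ Yhat ω = true ∧ A ω = a}
        {ω | Y ω = y ∧ Yhat ω = false ∧ A ω = a} := by
      rw [Set.disjoint_left]; rintro ω ⟨_, h1, _⟩ ⟨_, h2, _⟩; simp [h1] at h2
    rw [hs, measure_union hd (mE y false a)]
  have splitYhA : ∀ yh a : Bool,
      ℙ {ω | Yhat ω = yh ∧ A ω = a} = P true yh a + P false yh a := by
    intro yh a
    have hs : {ω | Yhat ω = yh ∧ A ω = a} =
        {ω | Y ω = true ∧ Yhat ω = yh ∧ A ω = a} ∪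
          {ω | Y ω = false ∧ Yhat ω = yh ∧ A ω = a} := by
      ext ω; cases h : Y ω <;> simp [h]
    have hd : Disjoint {ω | Y ω = true ∧ Yhat ω = yh ∧ A ω = a}
        {ω | Y ω = false ∧ Yhat ω = yh ∧ A ω = a} := by
      rw [Set.disjoint_left]; rintro ω ⟨h1, _⟩ ⟨h2, _⟩; simp [h1] at h2
    rw [hs, measure_union hd (mE false yh a)]
  have splitA : ∀ a : Bool,
      ℙ {ω | A ω = a} = P true true a + P true false a + (P false true a + P false false a) := by
    intro a
    have hs : {ω | A ω = a} = {ω | Y ω = true ∧ A ω = a} ∪ {ω | Y ω = false ∧ A ω = a} := by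
      ext ω; cases h : Y ω <;> simp [h]
    have hd : Disjoint {ω | Y ω = true ∧ A ω = a} {ω | Y ω = false ∧ A ω = a} := by
      rw [Set.disjoint_left]; rintro ω ⟨h1, _⟩ ⟨h2, _⟩; simp [h1] at h2
    rw [hs, measure_union hd (mYA false a), splitYA, splitYA]
  have splitYYh : ∀ y yh : Bool,
      ℙ {ω | Y ω = y ∧ Yhat ω = yh} = P y yh false + P y yh true := by
    intro y yh
    have hs : {ω | Y ω = y ∧ Yhat ω = yh} =
        {ω | Y ω = y ∧ Yhat ω = yh ∧ A ω = false} ∪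
          {ω | Y ω = y ∧ Yhat ω = yh ∧ A ω = true} := by
      ext ω; cases h : A ω <;> simp [h]
    have hd : Disjoint {ω | Y ω = y ∧ Yhat ω = yh ∧ A ω = false}
        {ω | Y ω = y ∧ Yhat ω = yh ∧ A ω = true} := by
      rw [Set.disjoint_left]; rintro ω ⟨_, _, h1⟩ ⟨_, _, h2⟩; simp [h1] at h2
    rw [hs, measure_union hd (mE y yh true)]
  -- intersection identities
  have int1 : ∀ y a : Bool, {ω | Y ω = y ∧ A ω = a} ∩ {ω | Yhat ω = true} =
      {ω | Y ω = y ∧ Yhat ω = true ∧ A ω = a} := by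
    intro y a; ext ω; simp only [Set.mem_inter_iff, Set.mem_setOf_eq]; tauto
  have int2 : ∀ yh a : Bool, {ω | Yhat ω = yh ∧ A ω = a} ∩ {ω | Y ω = true} =
      {ω | Y ω = true ∧ Yhat ω = yh ∧ A ω = a} := by
    intro yh a; ext ω; simp only [Set.mem_inter_iff, Set.mem_setOf_eq]; tauto
  have int3 : ∀ (a : Bool) (y : Bool), {ω | A ω = a} ∩ {ω | Y ω = y} = {ω | Y ω = y ∧ A ω = a} := by
    intro a y; ext ω; simp only [Set.mem_inter_iff, Set.mem_setOf_eq]; tauto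
  have int4 : ∀ yh y : Bool, {ω | Yhat ω = yh} ∩ {ω | Y ω = y} = {ω | Y ω = y ∧ Yhat ω = yh} := by
    intro yh y; ext ω; simp only [Set.mem_inter_iff, Set.mem_setOf_eq]; tauto
  -- real atoms
  set u0 : ℝ := (P true true false).toReal with hu0d
  set u1 : ℝ := (P true true true).toReal with hu1d
  set v0 : ℝ := (P true false false).toReal with hv0d
  set v1 : ℝ := (P true false true).toReal with hv1d
  set w0 : ℝ := (P false true false).toReal with hw0d
  set w1 : ℝ := (P false true true).toReal with hw1d
  set x0 : ℝ := (P false false false).toReal with hx0d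
  set x1 : ℝ := (P false false true).toReal with hx1d
  have hfin : ∀ s : Set Ω, ℙ s ≠ ⊤ := fun s => measure_ne_top ℙ s
  have jnn : ∀ y yh a : Bool, 0 ≤ (P y yh a).toReal := fun _ _ _ => ENNReal.toReal_nonneg
  -- toReal of the splits
  have rYA : ∀ y a : Bool,
      (ℙ {ω | Y ω = y ∧ A ω = a}).toReal = (P y true a).toReal + (P y false a).toReal := by
    intro y a; rw [splitYA]; exact ENNReal.toReal_add (hfin _) (hfin _)
  have rYhA : ∀ yh a : Bool,
      (ℙ {ω | Yhat ω = yh ∧ A ω = a}).toReal = (P true yh a).toReal + (P false yh a).toReal := by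
    intro yh a; rw [splitYhA]; exact ENNReal.toReal_add (hfin _) (hfin _)
  have rA : ∀ a : Bool, (ℙ {ω | A ω = a}).toReal =
      (P true true a).toReal + (P true false a).toReal +
        ((P false true a).toReal + (P false false a).toReal) := by
    intro a; rw [splitA]
    rw [ENNReal.toReal_add (by finiteness) (by finiteness),
      ENNReal.toReal_add (by finiteness) (by finiteness),
      ENNReal.toReal_add (by finiteness) (by finiteness)]
  have rYYh : ∀ y yh : Bool,
      (ℙ {ω | Y ω = y ∧ Yhat ω = yh}).toReal = (P y yh false).toReal + (P y yh true).toReal := by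
    intro y yh; rw [splitYYh]; exact ENNReal.toReal_add (hfin _) (hfin _)
  -- positivity of denominators
  have pYA : ∀ y a : Bool, 0 < (ℙ {ω | Y ω = y ∧ A ω = a}).toReal :=
    fun y a => ENNReal.toReal_pos (hposYA y a) (hfin _)
  have pYhA : ∀ yh a : Bool, 0 < (ℙ {ω | Yhat ω = yh ∧ A ω = a}).toReal :=
    fun yh a => ENNReal.toReal_pos (hposYhatA yh a) (hfin _)
  have pA : ∀ a : Bool, 0 < (ℙ {ω | A ω = a}).toReal := by
    intro a
    refine ENNReal.toReal_pos (fun h0 => hposYA true a ?_) (hfin _)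
    exact measure_mono_null (fun ω hω => hω.2) h0
  -- real form of conditional probabilities
  have condR : ∀ (s t : Set Ω), MeasurableSet s →
      ((ℙ[|s]) t).toReal = (ℙ (s ∩ t)).toReal / (ℙ s).toReal := by
    intro s t hs
    rw [cond_apply hs ℙ t, ENNReal.toReal_mul, ENNReal.toReal_inv, inv_mul_eq_div]
  -- EO in real, cross-multiplied form
  have e1 : u0 * v1 = u1 * v0 := by
    have h := congrArg ENNReal.toReal (hEO true)
    rw [condR _ _ (mYA true false), condR _ _ (mYA true true), int1, int1] at h
    rw [rYA, rYA] at h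
    rw [div_eq_div_iff (by rw [← rYA]; exact (pYA true false).ne') (by rw [← rYA]; exact (pYA true true).ne')]
      at h
    linear_combination h
  have e2 : w0 * x1 = w1 * x0 := by
    have h := congrArg ENNReal.toReal (hEO false)
    rw [condR _ _ (mYA false false), condR _ _ (mYA false true), int1, int1] at h
    rw [rYA, rYA] at h
    rw [div_eq_div_iff (by rw [← rYA]; exact (pYA false false).ne') (by rw [← rYA]; exact (pYA false true).ne')]
      at h
    linear_combination h
  have e3 : u0 * w1 = u1 * w0 := by
    have h := congrArg ENNReal.toReal (hPP true)
    rw [condR _ _ (mYhA true false), condR _ _ (mYhA true true), int2, int2] at h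
    rw [rYhA, rYhA] at h
    rw [div_eq_div_iff (by rw [← rYhA]; exact (pYhA true false).ne')
      (by rw [← rYhA]; exact (pYhA true true).ne')] at h
    linear_combination h
  have e4 : v0 * x1 = v1 * x0 := by
    have h := congrArg ENNReal.toReal (hPP false)
    rw [condR _ _ (mYhA false false), condR _ _ (mYhA false true), int2, int2] at h
    rw [rYhA, rYhA] at h
    rw [div_eq_div_iff (by rw [← rYhA]; exact (pYhA false false).ne')
      (by rw [← rYhA]; exact (pYhA false true).ne')] at h
    linear_combination h
  -- key cross identity from nondeterminism
  have key : u0 * x1 + v0 * w1 = u1 * x0 + v1 * w0 := by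
    obtain ⟨yh, hpos, hlt, hA0, hA1⟩ := hnondet
    have hSyh : ℙ {ω | Yhat ω = yh} ≠ 0 := by
      intro h0
      exact hA0 (measure_mono_null (fun ω hω => hω.1) h0)
    have hT : ℙ ({ω | Yhat ω = yh} ∩ {ω | Y ω = true}) ≠ 0 := by
      intro h0
      rw [cond_apply (mYh yh) ℙ _, h0, mul_zero] at hpos
      exact lt_irrefl _ hpos
    have hF : ℙ ({ω | Yhat ω = yh} ∩ {ω | Y ω = false}) ≠ 0 := by
      have hinst : IsProbabilityMeasure (ℙ[|{ω | Yhat ω = yh}]) :=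
        cond_isProbabilityMeasure hSyh
      have hcompl : {ω | Y ω = false} = {ω | Y ω = true}ᶜ := by
        ext ω; simp [Bool.not_eq_true]
      have hne : (ℙ[|{ω | Yhat ω = yh}]) {ω | Y ω = false} ≠ 0 := by
        rw [hcompl, prob_compl_eq_one_sub (mY true)]
        rw [Ne, tsub_eq_zero_iff_le]
        exact not_le.mpr hlt
      intro h0
      apply hne
      rw [cond_apply (mYh yh) ℙ _, h0, mul_zero]
    rw [int4] at hT hF
    have hT' : 0 < (P true yh false).toReal + (P true yh true).toReal := by
      rw [← rYYh]; exact ENNReal.toReal_pos hT (hfin _)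
    have hF' : 0 < (P false yh false).toReal + (P false yh true).toReal := by
      rw [← rYYh]; exact ENNReal.toReal_pos hF (hfin _)
    have hA0' : 0 < (P true yh false).toReal + (P false yh false).toReal := by
      rw [← rYhA]; exact pYhA yh false
    have hA1' : 0 < (P true yh true).toReal + (P false yh true).toReal := by
      rw [← rYhA]; exact pYhA yh true
    cases yh with
    | true =>
      have hTu : 0 < u0 + u1 := hT'
      have hFw : 0 < w0 + w1 := hF'
      have ha0 : 0 < u0 + w0 := hA0'
      have ha1 : 0 < u1 + w1 := hA1'
      have hu0 : 0 < u0 := by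
        have nn : (0:ℝ) ≤ u0 := by rw [hu0d]; exact ENNReal.toReal_nonneg
        rcases nn.lt_or_eq with h | h
        · exact h
        · exfalso
          have hw0 : 0 < w0 := by linarith
          have hz : u1 * w0 = 0 := by rw [← e3, ← h]; ring
          have hu1 : u1 = 0 := by
            rcases mul_eq_zero.mp hz with h' | h'
            · exact h'
            · exact absurd h' hw0.ne'
          rw [← h, hu1] at hTu; linarith
      have hw0 : 0 < w0 := by
        have nn : (0:ℝ) ≤ w0 := by rw [hw0d]; exact ENNReal.toReal_nonneg
        rcases nn.lt_or_eq with h | h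
        · exact h
        · exfalso
          have hz : u0 * w1 = 0 := by rw [e3, ← h]; ring
          have hw1 : w1 = 0 := by
            rcases mul_eq_zero.mp hz with h' | h'
            · exact absurd h' hu0.ne'
            · exact h'
          rw [← h, hw1] at hFw; linarith
      have hmul : u0 * w0 * (u0 * x1 + v0 * w1) = u0 * w0 * (u1 * x0 + v1 * w0) := by
        linear_combination u0 ^ 2 * e2 + (u0 * x0 + v0 * w0) * e3 - w0 ^ 2 * e1
      exact mul_left_cancel₀ (by positivity) hmul
    | false =>
      have hTv : 0 < v0 + v1 := hT'
      have hFx : 0 < x0 + x1 := hF'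
      have ha0 : 0 < v0 + x0 := hA0'
      have ha1 : 0 < v1 + x1 := hA1'
      have hv0 : 0 < v0 := by
        have nn : (0:ℝ) ≤ v0 := by rw [hv0d]; exact ENNReal.toReal_nonneg
        rcases nn.lt_or_eq with h | h
        · exact h
        · exfalso
          have hx0 : 0 < x0 := by linarith
          have hz : v1 * x0 = 0 := by rw [← e4, ← h]; ring
          have hv1 : v1 = 0 := by
            rcases mul_eq_zero.mp hz with h' | h'
            · exact h'
            · exact absurd h' hx0.ne'
          rw [← h, hv1] at hTv; linarith
      have hx0 : 0 < x0 := by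
        have nn : (0:ℝ) ≤ x0 := by rw [hx0d]; exact ENNReal.toReal_nonneg
        rcases nn.lt_or_eq with h | h
        · exact h
        · exfalso
          have hz : v0 * x1 = 0 := by rw [e4, ← h]; ring
          have hx1 : x1 = 0 := by
            rcases mul_eq_zero.mp hz with h' | h'
            · exact absurd h' hv0.ne'
            · exact h'
          rw [← h, hx1] at hFx; linarith
      have hmul : v0 * x0 * (u0 * x1 + v0 * w1) = v0 * x0 * (u1 * x0 + v1 * w0) := by
        linear_combination (u0 * x0 + v0 * w0) * e4 + x0 ^ 2 * e1 - v0 ^ 2 * e2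
      exact mul_left_cancel₀ (by positivity) hmul
  -- final computation
  have goalR : (ℙ ({ω | A ω = false} ∩ {ω | Y ω = true})).toReal / (ℙ {ω | A ω = false}).toReal =
      (ℙ ({ω | A ω = true} ∩ {ω | Y ω = true})).toReal / (ℙ {ω | A ω = true}).toReal := by
    rw [int3, int3, rYA, rYA]
    rw [div_eq_div_iff (pA false).ne' (pA true).ne', rA, rA]
    linear_combination e3 + e4 + key
  have h1 := condR {ω | A ω = false} {ω | Y ω = true} (mA false)
  have h2 := condR {ω | A ω = true} {ω | Y ω = true} (mA true)
  have hfin1 : (ℙ[|{ω | A ω = false}]) {ω | Y ω = true} ≠ ⊤ := by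
    rw [cond_apply (mA false) ℙ _]
    exact ENNReal.mul_ne_top (ENNReal.inv_ne_top.mpr
      (fun h0 => hposYA true false (measure_mono_null (fun ω hω => hω.2) h0))) (hfin _)
  have hfin2 : (ℙ[|{ω | A ω = true}]) {ω | Y ω = true} ≠ ⊤ := by
    rw [cond_apply (mA true) ℙ _]
    exact ENNReal.mul_ne_top (ENNReal.inv_ne_top.mpr
      (fun h0 => hposYA true true (measure_mono_null (fun ω hω => hω.2) h0))) (hfin _)
  rw [← ENNReal.toReal_eq_toReal_iff' hfin1 hfin2, h1, h2]
  exact goalR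
end
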